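/- arXiv:1108.1167 — 8 statements merged into one kernel-verified Lean document; each statement's English description precedes it below -/
import Mathlib

section
/- Let μ > 0, σ > 0, γ > 0 with γ ≠ 1, and λ ∈ [0, μ). Suppose the discriminant D := (γ−1)(μ²−λ²)/(γσ⁴) − (1/2 − μ/σ²)² is strictly negative, set a = √(−D) and b = 1/2 − μ/σ² + (γ−1)(μ−λ)/(γσ²), and assume |b| < a. Then the function w(y) = ( a·tanh( artanh(b/a) − a·y ) + (μ/σ² − 1/2) ) / (γ−1) is differentiable on all of ℝ and satisfies, for every y ∈ ℝ, the Riccati equation w'(y) + (1−γ)·w(y)² + (2μ/σ² − 1)·w(y) − (μ²−λ²)/(γσ⁴) = 0, together with the initial condition w(0) = (μ−λ)/(γσ²). -/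
/-- Real inverse hyperbolic tangent on (-1,1). -/
noncomputable def artanh (x : ℝ) : ℝ := (1 / 2) * Real.log ((1 + x) / (1 - x))

/-!
With `c = μ/σ² - 1/2` and `k = γ - 1`, the equation reads `w' = k w² - 2c w + (c² - a²)/k`
once `a² = -D` (valid because `a > 0` forces `-D > 0`) rewrites its constant term.
The substitution `w = (a u + c)/k` turns it into `u' = -a (1 - u²)`, which
`u(y) = tanh (y₀ - a y)` solves; `y₀ = artanh (b/a)` fixes `w 0`.
-/

lemma artanh_eq_real_artanh {x : ℝ} (hx : x ∈ Set.Icc (-1) 1) : artanh x = Real.artanh x :=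
  (Real.artanh_eq_half_log hx).symm

lemma tanh_artanh_of_abs_lt {x : ℝ} (hx : |x| < 1) : Real.tanh (artanh x) = x := by
  have hx' : x ∈ Set.Ioo (-1) 1 := abs_lt.mp hx
  rw [artanh_eq_real_artanh (Set.Ioo_subset_Icc_self hx'), Real.tanh_artanh hx']

open Real in
lemma Real.hasDerivAt_tanh (x : ℝ) : HasDerivAt tanh (1 - tanh x ^ 2) x := by
  have hcosh : cosh x ≠ 0 := (cosh_pos x).ne'
  have hquot := (hasDerivAt_sinh x).div (hasDerivAt_cosh x) hcosh
  rw [show sinh / cosh = tanh from funext fun y => (tanh_eq_sinh_div_cosh y).symm] at hquot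
  refine hquot.congr_deriv ?_
  rw [tanh_eq_sinh_div_cosh]
  field_simp

noncomputable def tanhRiccati (a c k y₀ y : ℝ) : ℝ := (a * Real.tanh (y₀ - a * y) + c) / k

section tanhRiccati

variable {a c k y₀ : ℝ}

lemma hasDerivAt_tanhRiccati (hk : k ≠ 0) (y : ℝ) :
    HasDerivAt (tanhRiccati a c k y₀)
      (k * tanhRiccati a c k y₀ y ^ 2 - 2 * c * tanhRiccati a c k y₀ y + (c ^ 2 - a ^ 2) / k) y := by
  have hinner : HasDerivAt (fun y => y₀ - a * y) (-a) y := by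
    simpa using ((hasDerivAt_id y).const_mul a).const_sub y₀
  have hw := ((((Real.hasDerivAt_tanh _).comp y hinner).const_mul a).add_const c).div_const k
  refine hw.congr_deriv ?_
  unfold tanhRiccati
  field_simp
  ring

lemma tanhRiccati_artanh_zero {b : ℝ} (hba : |b| < a) :
    tanhRiccati a c k (artanh (b / a)) 0 = (b + c) / k := by
  have ha : 0 < a := (abs_nonneg b).trans_lt hba
  have hba' : |b / a| < 1 := by rwa [abs_div, abs_of_pos ha, div_lt_one ha]
  rw [tanhRiccati, mul_zero, sub_zero, tanh_artanh_of_abs_lt hba', mul_div_cancel₀ _ ha.ne']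

end tanhRiccati

theorem riccati_tanh_solution_general
    (μ σ γ lam : ℝ) (hγ1 : γ ≠ 1)
    (a b : ℝ)
    (ha : a = Real.sqrt
      (-((γ - 1) * (μ ^ 2 - lam ^ 2) / (γ * σ ^ 4) - (1 / 2 - μ / σ ^ 2) ^ 2)))
    (hb : b = 1 / 2 - μ / σ ^ 2 + (γ - 1) * (μ - lam) / (γ * σ ^ 2))
    (hba : |b| < a)
    (w : ℝ → ℝ)
    (hw : w = fun y : ℝ =>
      (a * Real.tanh (artanh (b / a) - a * y) + (μ / σ ^ 2 - 1 / 2)) / (γ - 1)) :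
    Differentiable ℝ w ∧
    (∀ y : ℝ,
      deriv w y + (1 - γ) * (w y) ^ 2 + (2 * μ / σ ^ 2 - 1) * w y
        - (μ ^ 2 - lam ^ 2) / (γ * σ ^ 4) = 0) ∧
    w 0 = (μ - lam) / (γ * σ ^ 2) := by
  have hk : γ - 1 ≠ 0 := sub_ne_zero.mpr hγ1
  have ha_pos : 0 < a := (abs_nonneg b).trans_lt hba
  have ha_sq : a ^ 2 = -((γ - 1) * (μ ^ 2 - lam ^ 2) / (γ * σ ^ 4) - (1 / 2 - μ / σ ^ 2) ^ 2) := by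
    rw [ha, Real.sq_sqrt (Real.sqrt_pos.mp (ha ▸ ha_pos)).le]
  have hconst : (μ ^ 2 - lam ^ 2) / (γ * σ ^ 4) = ((μ / σ ^ 2 - 1 / 2) ^ 2 - a ^ 2) / (γ - 1) := by
    rw [eq_div_iff hk, ha_sq]
    ring
  have hw' : w = tanhRiccati a (μ / σ ^ 2 - 1 / 2) (γ - 1) (artanh (b / a)) := hw
  subst hw'
  refine ⟨fun y => (hasDerivAt_tanhRiccati hk y).differentiableAt, fun y => ?_, ?_⟩
  · rw [(hasDerivAt_tanhRiccati hk y).deriv, hconst]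
    ring
  · rw [tanhRiccati_artanh_zero hba, hb, div_eq_iff hk]
    ring

/-- The hyperbolic-tangent formula solves the Riccati ODE
`w' + (1-γ)w² + (2μ/σ² - 1)w - (μ²-λ²)/(γσ⁴) = 0` with `w 0 = (μ-λ)/(γσ²)`,
in the case of negative discriminant with `|b| < a`. -/
theorem riccati_tanh_solution
    (μ σ γ lam : ℝ) (hμ : 0 < μ) (hσ : 0 < σ) (hγ : 0 < γ) (hγ1 : γ ≠ 1)
    (hlam : lam ∈ Set.Ico 0 μ)
    (hD : (γ - 1) * (μ ^ 2 - lam ^ 2) / (γ * σ ^ 4) - (1 / 2 - μ / σ ^ 2) ^ 2 < 0)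
    (a b : ℝ)
    (ha : a = Real.sqrt
      (-((γ - 1) * (μ ^ 2 - lam ^ 2) / (γ * σ ^ 4) - (1 / 2 - μ / σ ^ 2) ^ 2)))
    (hb : b = 1 / 2 - μ / σ ^ 2 + (γ - 1) * (μ - lam) / (γ * σ ^ 2))
    (hba : |b| < a)
    (w : ℝ → ℝ)
    (hw : w = fun y : ℝ =>
      (a * Real.tanh (artanh (b / a) - a * y) + (μ / σ ^ 2 - 1 / 2)) / (γ - 1)) :
    Differentiable ℝ w ∧
    (∀ y : ℝ,
      deriv w y + (1 - γ) * (w y) ^ 2 + (2 * μ / σ ^ 2 - 1) * w y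
        - (μ ^ 2 - lam ^ 2) / (γ * σ ^ 4) = 0) ∧
    w 0 = (μ - lam) / (γ * σ ^ 2) :=
  riccati_tanh_solution_general μ σ γ lam hγ1 a b ha hb hba w hw
end

section
/- Let μ > 0, σ > 0, γ > 1, and λ ∈ [0, μ). Suppose the discriminant D := (γ−1)(μ²−λ²)/(γσ⁴) − (1/2 − μ/σ²)² is strictly positive, set a = √D and b = 1/2 − μ/σ² + (γ−1)(μ−λ)/(γσ²). Then the function w(y) = ( a·tan( arctan(b/a) + a·y ) + (μ/σ² − 1/2) ) / (γ−1) satisfies, for every y ∈ ℝ with arctan(b/a) + a·y ∈ (−π/2, π/2), the Riccati equation w'(y) + (1−γ)·w(y)² + (2μ/σ² − 1)·w(y) − (μ²−λ²)/(γσ⁴) = 0, together with the initial condition w(0) = (μ−λ)/(γσ²). -/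
/-! With `k = γ - 1` and `c = μ/σ² - 1/2`, the identity `tan' = 1 + tan²` shows that
`(a tan(θ₀ + a y) + c) / k` solves `w' = k w² - 2 c w + (a² + c²) / k` for any `θ₀`; the choice
of `a` makes `(a² + c²) / k = (μ² - λ²)/(γσ⁴)`, and `θ₀ = arctan (b / a)` gives `w 0 = (b + c) / k`. -/

open Real

noncomputable def tanRiccati (a c k θ₀ y : ℝ) : ℝ :=
  (a * tan (θ₀ + a * y) + c) / k

theorem hasDerivAt_tanRiccati {a c k θ₀ y : ℝ} (hk : k ≠ 0) (hcos : cos (θ₀ + a * y) ≠ 0) :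
    HasDerivAt (tanRiccati a c k θ₀)
      (k * tanRiccati a c k θ₀ y ^ 2 - 2 * c * tanRiccati a c k θ₀ y + (a ^ 2 + c ^ 2) / k) y := by
  have hθ : HasDerivAt (fun y => θ₀ + a * y) a y := by
    simpa using ((hasDerivAt_id y).const_mul a).const_add θ₀
  have hsec : 1 / cos (θ₀ + a * y) ^ 2 = 1 + tan (θ₀ + a * y) ^ 2 := by
    rw [one_div, ← inv_one_add_tan_sq hcos, inv_inv]
  refine (((hasDerivAt_tan hcos).comp y hθ).const_mul a |>.add_const c).div_const k
    |>.congr_deriv ?_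
  rw [hsec, tanRiccati]
  field_simp
  ring

theorem tanRiccati_arctan_div_zero {a b c k : ℝ} (ha : a ≠ 0) :
    tanRiccati a c k (arctan (b / a)) 0 = (b + c) / k := by
  rw [tanRiccati, mul_zero, add_zero, tan_arctan, mul_div_cancel₀ _ ha]

theorem riccati_tan_solution_general
    (μ σ γ lam : ℝ) (hγ : 1 < γ)
    (hD : 0 < (γ - 1) * (μ ^ 2 - lam ^ 2) / (γ * σ ^ 4) - (1 / 2 - μ / σ ^ 2) ^ 2)
    (a b : ℝ)
    (ha : a = Real.sqrt
      ((γ - 1) * (μ ^ 2 - lam ^ 2) / (γ * σ ^ 4) - (1 / 2 - μ / σ ^ 2) ^ 2))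
    (hb : b = 1 / 2 - μ / σ ^ 2 + (γ - 1) * (μ - lam) / (γ * σ ^ 2))
    (w : ℝ → ℝ)
    (hw : w = fun y : ℝ =>
      (a * Real.tan (Real.arctan (b / a) + a * y) + (μ / σ ^ 2 - 1 / 2)) / (γ - 1)) :
    (∀ y : ℝ,
      Real.arctan (b / a) + a * y ∈ Set.Ioo (-(Real.pi / 2)) (Real.pi / 2) →
      deriv w y + (1 - γ) * (w y) ^ 2 + (2 * μ / σ ^ 2 - 1) * w y
        - (μ ^ 2 - lam ^ 2) / (γ * σ ^ 4) = 0) ∧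
    w 0 = (μ - lam) / (γ * σ ^ 2) := by
  have hk : γ - 1 ≠ 0 := (sub_pos.2 hγ).ne'
  have ha0 : a ≠ 0 := ha ▸ (sqrt_pos.2 hD).ne'
  have ha2 : a ^ 2 = (γ - 1) * (μ ^ 2 - lam ^ 2) / (γ * σ ^ 4) - (1 / 2 - μ / σ ^ 2) ^ 2 :=
    ha ▸ sq_sqrt hD.le
  have hK : (μ ^ 2 - lam ^ 2) / (γ * σ ^ 4) = (a ^ 2 + (μ / σ ^ 2 - 1 / 2) ^ 2) / (γ - 1) := by
    rw [ha2]
    field_simp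
    ring
  have hw' : w = tanRiccati a (μ / σ ^ 2 - 1 / 2) (γ - 1) (arctan (b / a)) := hw
  refine ⟨fun y hy => ?_, ?_⟩
  · rw [hw', (hasDerivAt_tanRiccati hk (cos_pos_of_mem_Ioo hy).ne').deriv, hK]
    ring
  · rw [hw', tanRiccati_arctan_div_zero ha0, hb]
    field_simp
    ring

/-- The tangent formula solves the Riccati ODE
`w' + (1-γ)w² + (2μ/σ² - 1)w - (μ²-λ²)/(γσ⁴) = 0` with `w 0 = (μ-λ)/(γσ²)`,
in the case of positive discriminant (`γ > 1`), on the domain where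
`arctan (b/a) + a·y ∈ (-π/2, π/2)`. -/
theorem riccati_tan_solution
    (μ σ γ lam : ℝ) (hμ : 0 < μ) (hσ : 0 < σ) (hγ : 1 < γ)
    (hlam : lam ∈ Set.Ico 0 μ)
    (hD : 0 < (γ - 1) * (μ ^ 2 - lam ^ 2) / (γ * σ ^ 4) - (1 / 2 - μ / σ ^ 2) ^ 2)
    (a b : ℝ)
    (ha : a = Real.sqrt
      ((γ - 1) * (μ ^ 2 - lam ^ 2) / (γ * σ ^ 4) - (1 / 2 - μ / σ ^ 2) ^ 2))
    (hb : b = 1 / 2 - μ / σ ^ 2 + (γ - 1) * (μ - lam) / (γ * σ ^ 2))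
    (w : ℝ → ℝ)
    (hw : w = fun y : ℝ =>
      (a * Real.tan (Real.arctan (b / a) + a * y) + (μ / σ ^ 2 - 1 / 2)) / (γ - 1)) :
    (∀ y : ℝ,
      Real.arctan (b / a) + a * y ∈ Set.Ioo (-(Real.pi / 2)) (Real.pi / 2) →
      deriv w y + (1 - γ) * (w y) ^ 2 + (2 * μ / σ ^ 2 - 1) * w y
        - (μ ^ 2 - lam ^ 2) / (γ * σ ^ 4) = 0) ∧
    w 0 = (μ - lam) / (γ * σ ^ 2) :=
  riccati_tan_solution_general μ σ γ lam hγ hD a b ha hb w hw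
end

section
/- Let μ > 0, σ > 0, γ > 0 with γ ≠ 1, and λ ∈ [0, μ). Suppose the discriminant D := (γ−1)(μ²−λ²)/(γσ⁴) − (1/2 − μ/σ²)² is strictly negative, set a = √(−D) and b = 1/2 − μ/σ² + (γ−1)(μ−λ)/(γσ²), and assume b/a > 1. Then the function w(y) = ( a·coth( arcoth(b/a) − a·y ) + (μ/σ² − 1/2) ) / (γ−1), where coth(x) = cosh(x)/sinh(x) and arcoth(x) = artanh(1/x) for |x| > 1, satisfies, for every y < arcoth(b/a)/a, the Riccati equation w'(y) + (1−γ)·w(y)² + (2μ/σ² − 1)·w(y) − (μ²−λ²)/(γσ⁴) = 0, together with the initial condition w(0) = (μ−λ)/(γσ²). -/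
/-- Real hyperbolic cotangent. -/
noncomputable def coth (x : ℝ) : ℝ := Real.cosh x / Real.sinh x

/-- Real inverse hyperbolic cotangent, `arcoth x = artanh (1/x)` for `|x| > 1`. -/
noncomputable def arcoth (x : ℝ) : ℝ := artanh (1 / x)

lemma coth_eq_inv_tanh (x : ℝ) : coth x = (Real.tanh x)⁻¹ := by
  rw [coth, Real.tanh_eq_sinh_div_cosh, inv_div]

lemma coth_arcoth {t : ℝ} (ht : 1 < |t|) : coth (arcoth t) = t := by
  have ht' : 1 / t ∈ Set.Ioo (-1) 1 := by
    rw [Set.mem_Ioo, ← abs_lt, abs_div, abs_one, div_lt_one (by linarith)]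
    exact ht
  rw [coth_eq_inv_tanh, arcoth, artanh_eq_real_artanh (Set.Ioo_subset_Icc_self ht'),
    Real.tanh_artanh ht', one_div, inv_inv]

lemma hasDerivAt_coth {x : ℝ} (hx : x ≠ 0) : HasDerivAt coth (1 - coth x ^ 2) x := by
  have hsinh : Real.sinh x ≠ 0 := Real.sinh_ne_zero.mpr hx
  refine ((Real.hasDerivAt_cosh x).div (Real.hasDerivAt_sinh x) hsinh).congr_deriv ?_
  rw [coth]
  field_simp

lemma coth_solves_riccati {γ m c a A y : ℝ} (hγ : γ ≠ 1) (ha : a ^ 2 = m ^ 2 - (γ - 1) * c)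
    (hy : A - a * y ≠ 0) :
    deriv (fun z => (a * coth (A - a * z) + m) / (γ - 1)) y
      + (1 - γ) * ((a * coth (A - a * y) + m) / (γ - 1)) ^ 2
      + 2 * m * ((a * coth (A - a * y) + m) / (γ - 1)) - c = 0 := by
  have hinner : HasDerivAt (fun z => A - a * z) (-a) y := by
    simpa using ((hasDerivAt_id y).const_mul a).const_sub A
  have hderiv : HasDerivAt (fun z => (a * coth (A - a * z) + m) / (γ - 1))
      (a * ((1 - coth (A - a * y) ^ 2) * -a) / (γ - 1)) y :=
    ((((hasDerivAt_coth hy).comp y hinner).const_mul a).add_const m).div_const (γ - 1)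
  rw [hderiv.deriv]
  have hγ' : γ - 1 ≠ 0 := sub_ne_zero.mpr hγ
  field_simp
  linear_combination (1 - γ) * ha

theorem riccati_coth_solution_general
    (μ σ γ lam : ℝ) (hγ1 : γ ≠ 1)
    (a b : ℝ)
    (ha : a = Real.sqrt
      (-((γ - 1) * (μ ^ 2 - lam ^ 2) / (γ * σ ^ 4) - (1 / 2 - μ / σ ^ 2) ^ 2)))
    (hb : b = 1 / 2 - μ / σ ^ 2 + (γ - 1) * (μ - lam) / (γ * σ ^ 2))
    (hba : 1 < b / a)
    (w : ℝ → ℝ)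
    (hw : w = fun y : ℝ =>
      (a * coth (arcoth (b / a) - a * y) + (μ / σ ^ 2 - 1 / 2)) / (γ - 1)) :
    (∀ y : ℝ, y < arcoth (b / a) / a →
      deriv w y + (1 - γ) * (w y) ^ 2 + (2 * μ / σ ^ 2 - 1) * w y
        - (μ ^ 2 - lam ^ 2) / (γ * σ ^ 4) = 0) ∧
    w 0 = (μ - lam) / (γ * σ ^ 2) := by
  -- Since `b / 0 = 0`, `1 < b / a` forces `a ≠ 0`.
  have ha_pos : 0 < a := by
    rcases (ha ▸ Real.sqrt_nonneg _ : 0 ≤ a).lt_or_eq with h | h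
    · exact h
    · norm_num [← h] at hba
  have ha_sq :
      a ^ 2 = (μ / σ ^ 2 - 1 / 2) ^ 2 - (γ - 1) * ((μ ^ 2 - lam ^ 2) / (γ * σ ^ 4)) := by
    rw [ha, Real.sq_sqrt (Real.sqrt_pos.mp (ha ▸ ha_pos)).le]
    ring
  subst hw
  refine ⟨fun y hy => ?_, ?_⟩
  · have hpole : arcoth (b / a) - a * y ≠ 0 := by
      rw [lt_div_iff₀ ha_pos] at hy
      linarith
    rw [show 2 * μ / σ ^ 2 - 1 = 2 * (μ / σ ^ 2 - 1 / 2) by ring]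
    exact coth_solves_riccati hγ1 ha_sq hpole
  · simp only [mul_zero, sub_zero]
    rw [coth_arcoth (hba.trans_le (le_abs_self _)),
      mul_div_cancel₀ _ ha_pos.ne', hb,
      show 1 / 2 - μ / σ ^ 2 + (γ - 1) * (μ - lam) / (γ * σ ^ 2) + (μ / σ ^ 2 - 1 / 2)
        = (γ - 1) * ((μ - lam) / (γ * σ ^ 2)) by ring,
      mul_div_cancel_left₀ _ (sub_ne_zero.mpr hγ1)]

/-- The hyperbolic-cotangent formula solves the Riccati ODE
`w' + (1-γ)w² + (2μ/σ² - 1)w - (μ²-λ²)/(γσ⁴) = 0` with `w 0 = (μ-λ)/(γσ²)`,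
in the case of negative discriminant with `b/a > 1`, for `y < arcoth (b/a) / a`. -/
theorem riccati_coth_solution
    (μ σ γ lam : ℝ) (hμ : 0 < μ) (hσ : 0 < σ) (hγ : 0 < γ) (hγ1 : γ ≠ 1)
    (hlam : lam ∈ Set.Ico 0 μ)
    (hD : (γ - 1) * (μ ^ 2 - lam ^ 2) / (γ * σ ^ 4) - (1 / 2 - μ / σ ^ 2) ^ 2 < 0)
    (a b : ℝ)
    (ha : a = Real.sqrt
      (-((γ - 1) * (μ ^ 2 - lam ^ 2) / (γ * σ ^ 4) - (1 / 2 - μ / σ ^ 2) ^ 2)))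
    (hb : b = 1 / 2 - μ / σ ^ 2 + (γ - 1) * (μ - lam) / (γ * σ ^ 2))
    (hba : 1 < b / a)
    (w : ℝ → ℝ)
    (hw : w = fun y : ℝ =>
      (a * coth (arcoth (b / a) - a * y) + (μ / σ ^ 2 - 1 / 2)) / (γ - 1)) :
    (∀ y : ℝ, y < arcoth (b / a) / a →
      deriv w y + (1 - γ) * (w y) ^ 2 + (2 * μ / σ ^ 2 - 1) * w y
        - (μ ^ 2 - lam ^ 2) / (γ * σ ^ 4) = 0) ∧
    w 0 = (μ - lam) / (γ * σ ^ 2) :=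
  riccati_coth_solution_general μ σ γ lam hγ1 a b ha hb hba w hw
end

section
/- Let μ > 0, σ > 0, γ > 0 with γ ≠ 1, ε ∈ (0,1), and λ ∈ (0, μ) with μ + λ < γσ². Set l = (μ−λ)/(γσ² − (μ−λ)), u = (1/(1−ε))·(μ+λ)/(γσ² − (μ+λ)), and L = log(u/l), and assume L > 0. Let w : [0, L] → (0, 1) be continuously differentiable, nondecreasing, satisfy the Riccati equation w'(y) + (1−γ)·w(y)² + (2μ/σ² − 1)·w(y) − (μ²−λ²)/(γσ⁴) = 0 for all y ∈ [0, L], with w(0) = (μ−λ)/(γσ²) and w(L) = (μ+λ)/(γσ²). Then the function g(y) = w(y) / ( l·e^y·(1 − w(y)) ) satisfies g(0) = 1, g(L) = 1 − ε, g is nonincreasing on [0, L], and consequently 1 − ε ≤ g(y) ≤ 1 for all y ∈ [0, L]. -/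
/-!
Write `A = γσ²`. Since `g = (w/(1-w)) / (l·e^y)`, the logarithmic derivative of `g` is
`w'/(w(1-w)) - 1`, so `g` is nonincreasing exactly where `w' ≤ w(1-w)`. By the Riccati equation,
`w' - w(1-w) = ((A·w - μ)² - λ²)/(γσ⁴)`, which is `≤ 0` because monotonicity of `w` traps `w(y)`
between `w(0) = (μ-λ)/A` and `w(L) = (μ+λ)/A`. The endpoint values are direct computations:
`w(0)/(1-w(0)) = l` and `w(L)/(1-w(L)) = (1-ε)u = (1-ε)·l·e^L`.
-/

open Set Real

theorem hasDerivWithinAt_div_const_mul_exp_mul_one_sub {f : ℝ → ℝ} {f' c y : ℝ} {s : Set ℝ}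
    (hf : HasDerivWithinAt f f' s y) (hc : c ≠ 0) (hfy : f y ≠ 1) :
    HasDerivWithinAt (fun x => f x / (c * exp x * (1 - f x)))
      ((f' - f y * (1 - f y)) / (c * exp y * (1 - f y) ^ 2)) s y := by
  have hfy' : 1 - f y ≠ 0 := sub_ne_zero.2 (Ne.symm hfy)
  have hden : HasDerivWithinAt (fun x => c * exp x * (1 - f x))
      (c * exp y * (1 - f y) + c * exp y * (0 - f')) s y :=
    ((hasDerivAt_exp y).hasDerivWithinAt.const_mul c).mul ((hasDerivWithinAt_const y s 1).sub hf)
  refine (hf.div hden (mul_ne_zero (mul_ne_zero hc (exp_ne_zero y)) hfy')).congr_deriv ?_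
  field_simp
  ring

theorem antitoneOn_div_const_mul_exp_mul_one_sub {f f' : ℝ → ℝ} {c : ℝ} {D : Set ℝ}
    (hD : Convex ℝ D) (hc : 0 < c) (hf : ∀ y ∈ D, HasDerivWithinAt f (f' y) D y)
    (hf1 : ∀ y ∈ D, f y < 1) (hf' : ∀ y ∈ D, f' y ≤ f y * (1 - f y)) :
    AntitoneOn (fun y => f y / (c * exp y * (1 - f y))) D := by
  have hderiv : ∀ y ∈ D, HasDerivWithinAt (fun x => f x / (c * exp x * (1 - f x)))
      ((f' y - f y * (1 - f y)) / (c * exp y * (1 - f y) ^ 2)) D y := fun y hy =>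
    hasDerivWithinAt_div_const_mul_exp_mul_one_sub (hf y hy) hc.ne' (hf1 y hy).ne
  refine antitoneOn_of_hasDerivWithinAt_nonpos hD
    (fun y hy => (hderiv y hy).continuousWithinAt)
    (fun y hy => (hderiv y (interior_subset hy)).mono interior_subset) fun y hy => ?_
  have hy := interior_subset hy
  exact div_nonpos_of_nonpos_of_nonneg (sub_nonpos.2 (hf' y hy)) (by positivity)

theorem riccati_sub_logistic_eq {μ σ γ lam w w' : ℝ} (hγ : γ ≠ 0) (hσ : σ ≠ 0)
    (hric : w' + (1 - γ) * w ^ 2 + (2 * μ / σ ^ 2 - 1) * w - (μ ^ 2 - lam ^ 2) / (γ * σ ^ 4) = 0) :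
    w' - w * (1 - w) = ((γ * σ ^ 2 * w - μ) ^ 2 - lam ^ 2) / (γ * σ ^ 4) := by
  rw [eq_div_iff (by positivity)]
  field_simp at hric
  linear_combination hric

theorem sq_mul_sub_le_sq_of_mem_Icc {A μ lam w : ℝ} (hA : 0 < A)
    (hw : w ∈ Icc ((μ - lam) / A) ((μ + lam) / A)) : (A * w - μ) ^ 2 ≤ lam ^ 2 := by
  rw [mem_Icc, div_le_iff₀' hA, le_div_iff₀' hA] at hw
  exact sq_le_sq' (by linarith) (by linarith)

theorem div_mul_one_sub_div_self {x A c : ℝ} (hA : A ≠ 0) (hAx : A - x ≠ 0) :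
    x / A / (c * (1 - x / A)) = x / (A - x) / c := by
  field_simp

theorem shadow_price_in_spread_general
    (μ σ γ ε lam : ℝ) (hσ : 0 < σ) (hγ : 0 < γ)
    (hε : ε ∈ Set.Ioo (0 : ℝ) 1) (hlam : lam ∈ Set.Ioo 0 μ)
    (hlev : μ + lam < γ * σ ^ 2)
    (l u L : ℝ)
    (hl : l = (μ - lam) / (γ * σ ^ 2 - (μ - lam)))
    (hu : u = (1 / (1 - ε)) * ((μ + lam) / (γ * σ ^ 2 - (μ + lam))))
    (hL : L = Real.log (u / l))
    (w w' : ℝ → ℝ)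
    (hderiv : ∀ y ∈ Set.Icc 0 L, HasDerivWithinAt w (w' y) (Set.Icc 0 L) y)
    (hrange : ∀ y ∈ Set.Icc 0 L, w y ∈ Set.Ioo (0 : ℝ) 1)
    (hmono : MonotoneOn w (Set.Icc 0 L))
    (hric : ∀ y ∈ Set.Icc 0 L,
      w' y + (1 - γ) * (w y) ^ 2 + (2 * μ / σ ^ 2 - 1) * w y
        - (μ ^ 2 - lam ^ 2) / (γ * σ ^ 4) = 0)
    (hw0 : w 0 = (μ - lam) / (γ * σ ^ 2))
    (hwL : w L = (μ + lam) / (γ * σ ^ 2))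
    (g : ℝ → ℝ)
    (hg : g = fun y : ℝ => w y / (l * Real.exp y * (1 - w y))) :
    g 0 = 1 ∧ g L = 1 - ε ∧ AntitoneOn g (Set.Icc 0 L) ∧
    ∀ y ∈ Set.Icc 0 L, 1 - ε ≤ g y ∧ g y ≤ 1 := by
  obtain ⟨hε0, hε1⟩ := hε
  obtain ⟨hlam0, hlamμ⟩ := hlam
  have hA : 0 < γ * σ ^ 2 := by positivity
  have hl0 : 0 < l := by rw [hl]; exact div_pos (by linarith) (by linarith)
  have hu0 : 0 < u := by rw [hu]; exact mul_pos (one_div_pos.2 (by linarith)) (div_pos (by linarith) (by linarith))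
  have hg0 : g 0 = 1 := by
    simp only [hg]
    rw [exp_zero, mul_one, hw0, div_mul_one_sub_div_self hA.ne' (by linarith), ← hl,
      div_self hl0.ne']
  have hgL : g L = 1 - ε := by
    simp only [hg]
    rw [show exp L = u / l from hL ▸ exp_log (div_pos hu0 hl0), mul_div_cancel₀ u hl0.ne', hwL,
      div_mul_one_sub_div_self hA.ne' (by linarith), hu,
      div_mul_cancel_right₀ (div_pos (by linarith) (by linarith)).ne', one_div, inv_inv]
  have hanti : AntitoneOn g (Icc 0 L) := by
    rw [hg]
    refine antitoneOn_div_const_mul_exp_mul_one_sub (convex_Icc 0 L) hl0 hderiv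
      (fun y hy => (hrange y hy).2) fun y hy => ?_
    have hwy : w y ∈ Icc (w 0) (w L) := hmono.mapsTo_Icc hy
    rw [hw0, hwL] at hwy
    rw [← sub_nonpos, riccati_sub_logistic_eq hγ.ne' hσ.ne' (hric y hy)]
    exact div_nonpos_of_nonpos_of_nonneg
      (sub_nonpos.2 (sq_mul_sub_le_sq_of_mem_Icc hA hwy)) (by positivity)
  refine ⟨hg0, hgL, hanti, fun y hy => ?_⟩
  rw [← hgL, ← hg0]
  exact hanti.mapsTo_Icc hy

/-- The shadow price stays in the bid-ask spread: the
multiplicative deviation `g(y) = w(y)/(l·e^y·(1-w(y)))` satisfies `g(0) = 1`,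
`g(L) = 1-ε`, is nonincreasing on `[0, L]`, and hence takes values in
`[1-ε, 1]`. -/
theorem shadow_price_in_spread
    (μ σ γ ε lam : ℝ) (hμ : 0 < μ) (hσ : 0 < σ) (hγ : 0 < γ) (hγ1 : γ ≠ 1)
    (hε : ε ∈ Set.Ioo (0 : ℝ) 1) (hlam : lam ∈ Set.Ioo 0 μ)
    (hlev : μ + lam < γ * σ ^ 2)
    (l u L : ℝ)
    (hl : l = (μ - lam) / (γ * σ ^ 2 - (μ - lam)))
    (hu : u = (1 / (1 - ε)) * ((μ + lam) / (γ * σ ^ 2 - (μ + lam))))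
    (hL : L = Real.log (u / l)) (hLpos : 0 < L)
    (w w' : ℝ → ℝ)
    (hderiv : ∀ y ∈ Set.Icc 0 L, HasDerivWithinAt w (w' y) (Set.Icc 0 L) y)
    (hderivcont : ContinuousOn w' (Set.Icc 0 L))
    (hrange : ∀ y ∈ Set.Icc 0 L, w y ∈ Set.Ioo (0 : ℝ) 1)
    (hmono : MonotoneOn w (Set.Icc 0 L))
    (hric : ∀ y ∈ Set.Icc 0 L,
      w' y + (1 - γ) * (w y) ^ 2 + (2 * μ / σ ^ 2 - 1) * w y
        - (μ ^ 2 - lam ^ 2) / (γ * σ ^ 4) = 0)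
    (hw0 : w 0 = (μ - lam) / (γ * σ ^ 2))
    (hwL : w L = (μ + lam) / (γ * σ ^ 2))
    (g : ℝ → ℝ)
    (hg : g = fun y : ℝ => w y / (l * Real.exp y * (1 - w y))) :
    g 0 = 1 ∧ g L = 1 - ε ∧ AntitoneOn g (Set.Icc 0 L) ∧
    ∀ y ∈ Set.Icc 0 L, 1 - ε ≤ g y ∧ g y ≤ 1 :=
  shadow_price_in_spread_general μ σ γ ε lam hσ hγ hε hlam hlev l u L hl hu hL w w' hderiv hrange
    hmono hric hw0 hwL g hg
end

section
/- Let μ > 0, σ > 0, γ > 0 with γ ≠ 1, λ ∈ (0, μ) with μ + λ < γσ², and L > 0. Let w : [0, L] → (0, 1) be twice differentiable, nondecreasing, satisfy the Riccati equation w'(y) + (1−γ)·w(y)² + (2μ/σ² − 1)·w(y) − (μ²−λ²)/(γσ⁴) = 0 for all y ∈ [0, L], with w(0) = (μ−λ)/(γσ²) and w(L) = (μ+λ)/(γσ²). Then the function w̃(y) = w(y) − w'(y)/(1 − w(y)) satisfies w̃(0) = 0, w̃(L) = 0, and w̃(y) ≥ 0 for every y ∈ [0, L]. -/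
/-!
The Riccati equation says exactly that `w (1 - w) - w'` is the quadratic
`γ (w - (μ - λ)/(γσ²)) ((μ + λ)/(γσ²) - w)` in `w`, whose roots are the boundary values of `w`.
Since `w` is nondecreasing it stays between these roots, so the quadratic is nonnegative on
`[0, L]` and vanishes at both ends; dividing by `1 - w > 0` gives `w̃`.
-/

open Set

lemma riccati_gap_factorization {μ σ γ lam x x' : ℝ} (hσ : σ ≠ 0) (hγ : γ ≠ 0)
    (hric : x' + (1 - γ) * x ^ 2 + (2 * μ / σ ^ 2 - 1) * x
      - (μ ^ 2 - lam ^ 2) / (γ * σ ^ 4) = 0) :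
    x * (1 - x) - x' =
      γ * (x - (μ - lam) / (γ * σ ^ 2)) * ((μ + lam) / (γ * σ ^ 2) - x) := by
  rw [show x' = -((1 - γ) * x ^ 2 + (2 * μ / σ ^ 2 - 1) * x
      - (μ ^ 2 - lam ^ 2) / (γ * σ ^ 4)) by linarith]
  field_simp
  ring

lemma sub_div_one_sub_eq {x x' : ℝ} (hx : x ≠ 1) :
    x - x' / (1 - x) = (x * (1 - x) - x') / (1 - x) := by
  have : 1 - x ≠ 0 := sub_ne_zero.2 hx.symm
  field_simp

theorem correction_integrand_nonneg_general
    (μ σ γ lam L : ℝ) (hσ : 0 < σ) (hγ : 0 < γ)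
    (hL : 0 < L)
    (w w' : ℝ → ℝ)
    (hrange : ∀ y ∈ Set.Icc 0 L, w y ∈ Set.Ioo (0 : ℝ) 1)
    (hmono : MonotoneOn w (Set.Icc 0 L))
    (hric : ∀ y ∈ Set.Icc 0 L,
      w' y + (1 - γ) * (w y) ^ 2 + (2 * μ / σ ^ 2 - 1) * w y
        - (μ ^ 2 - lam ^ 2) / (γ * σ ^ 4) = 0)
    (hw0 : w 0 = (μ - lam) / (γ * σ ^ 2))
    (hwL : w L = (μ + lam) / (γ * σ ^ 2))
    (wtil : ℝ → ℝ)
    (hwtil : wtil = fun y : ℝ => w y - w' y / (1 - w y)) :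
    wtil 0 = 0 ∧ wtil L = 0 ∧ ∀ y ∈ Set.Icc 0 L, 0 ≤ wtil y := by
  have hwtil_eq : ∀ y ∈ Icc 0 L, wtil y =
      γ * (w y - w 0) * (w L - w y) / (1 - w y) := fun y hy => by
    simp only [hwtil]
    rw [sub_div_one_sub_eq (hrange y hy).2.ne, hw0, hwL,
      riccati_gap_factorization hσ.ne' hγ.ne' (hric y hy)]
  have h0 : (0 : ℝ) ∈ Icc 0 L := left_mem_Icc.2 hL.le
  have hL' : L ∈ Icc 0 L := right_mem_Icc.2 hL.le
  refine ⟨by simp [hwtil_eq 0 h0], by simp [hwtil_eq L hL'], fun y hy => ?_⟩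
  obtain ⟨hw0y, hwyL⟩ := hmono.mapsTo_Icc hy
  rw [hwtil_eq y hy]
  exact div_nonneg (mul_nonneg (mul_nonneg hγ.le (sub_nonneg.2 hw0y)) (sub_nonneg.2 hwyL))
    (sub_nonneg.2 (hrange y hy).2.le)

/-- The correction integrand `w̃ = w - w'/(1-w)` vanishes at the
trading boundaries and is nonnegative throughout the no-trade region in the
no-leverage regime `μ + λ < γσ²`. -/
theorem correction_integrand_nonneg
    (μ σ γ lam L : ℝ) (hμ : 0 < μ) (hσ : 0 < σ) (hγ : 0 < γ) (hγ1 : γ ≠ 1)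
    (hlam : lam ∈ Set.Ioo 0 μ) (hlev : μ + lam < γ * σ ^ 2) (hL : 0 < L)
    (w w' w'' : ℝ → ℝ)
    (hderiv : ∀ y ∈ Set.Icc 0 L, HasDerivWithinAt w (w' y) (Set.Icc 0 L) y)
    (hderiv2 : ∀ y ∈ Set.Icc 0 L, HasDerivWithinAt w' (w'' y) (Set.Icc 0 L) y)
    (hrange : ∀ y ∈ Set.Icc 0 L, w y ∈ Set.Ioo (0 : ℝ) 1)
    (hmono : MonotoneOn w (Set.Icc 0 L))
    (hric : ∀ y ∈ Set.Icc 0 L,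
      w' y + (1 - γ) * (w y) ^ 2 + (2 * μ / σ ^ 2 - 1) * w y
        - (μ ^ 2 - lam ^ 2) / (γ * σ ^ 4) = 0)
    (hw0 : w 0 = (μ - lam) / (γ * σ ^ 2))
    (hwL : w L = (μ + lam) / (γ * σ ^ 2))
    (wtil : ℝ → ℝ)
    (hwtil : wtil = fun y : ℝ => w y - w' y / (1 - w y)) :
    wtil 0 = 0 ∧ wtil L = 0 ∧ ∀ y ∈ Set.Icc 0 L, 0 ≤ wtil y :=
  correction_integrand_nonneg_general μ σ γ lam L hσ hγ hL w w' hrange hmono hric hw0 hwL wtil hwtil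
end

section
/- Let μ > 0, σ > 0, γ > 0 with 0 < μ/(γσ²) and μ/(γσ²) ≠ 1, write π* = μ/(γσ²), and let ε₀ > 0 and λ : (0, ε₀) → (0, μ) be a function satisfying λ(ε) = γσ²·( (3/(4γ))·π*²·(1−π*)² )^{1/3}·ε^{1/3} + O(ε) as ε ↓ 0. Then the liquidity premium LiPr(ε) = μ − √(μ² − λ(ε)²) satisfies the asymptotic expansion LiPr(ε) = (μ/(2π*²))·( (3/(4γ))·π*²·(1−π*)² )^{2/3}·ε^{2/3} + O(ε^{4/3}) as ε ↓ 0. -/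
open Asymptotics Filter Set Topology

/-!
Write `c = γσ²K^{1/3}` with `K = (3/(4γ))π*²(1-π*)²`, so that `λ(ε) = c ε^{1/3} + O(ε)` and the
claimed leading coefficient `(μ/(2π*²))K^{2/3}` equals `c²/(2μ)`. Since
`μ - √(μ² - λ²) = λ²/(2μ) + O(λ⁴)` and `λ² = c² ε^{2/3} + O(ε^{1/3} · ε)`, both error terms are
`O(ε^{4/3})`.
-/

theorem abs_sub_sqrt_sq_sub_sq_sub_sq_div_le {μ x : ℝ} (hμ : 0 < μ) (hx : x ^ 2 ≤ μ ^ 2) :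
    |μ - √(μ ^ 2 - x ^ 2) - x ^ 2 / (2 * μ)| ≤ x ^ 4 / (2 * μ ^ 3) := by
  set s := √(μ ^ 2 - x ^ 2)
  have hs : 0 ≤ s := Real.sqrt_nonneg _
  have hs_sq : s ^ 2 = μ ^ 2 - x ^ 2 := Real.sq_sqrt (by linarith)
  have hs_le : s ≤ μ := by nlinarith
  have hremainder : μ - s - x ^ 2 / (2 * μ) = (μ - s) ^ 2 / (2 * μ) := by
    field_simp
    nlinarith
  have hgap : (μ - s) * μ ≤ x ^ 2 := by nlinarith
  have hgap_sq : ((μ - s) * μ) ^ 2 ≤ (x ^ 2) ^ 2 :=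
    pow_le_pow_left₀ (mul_nonneg (by linarith) hμ.le) hgap 2
  rw [hremainder, abs_of_nonneg (by positivity), div_le_div_iff₀ (by positivity) (by positivity)]
  nlinarith

theorem isBigO_sub_sqrt_sq_sub_sq_sub_sq_div {α : Type*} {l : Filter α} {f : α → ℝ} {μ : ℝ}
    (hμ : 0 < μ) (hf : ∀ᶠ x in l, f x ^ 2 ≤ μ ^ 2) :
    (fun x => μ - √(μ ^ 2 - f x ^ 2) - f x ^ 2 / (2 * μ)) =O[l] fun x => f x ^ 4 :=
  .of_bound (1 / (2 * μ ^ 3)) <| hf.mono fun x hx => by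
    rw [Real.norm_eq_abs, Real.norm_of_nonneg (by positivity), one_div_mul_eq_div]
    exact abs_sub_sqrt_sq_sub_sq_sub_sq_div_le hμ hx

section ConstMulExpansion

variable {α 𝕜 : Type*} [NormedField 𝕜] {l : Filter α} {f g h : α → 𝕜} {c : 𝕜}

theorem Asymptotics.IsBigO.of_sub_const_mul (hf : (fun x => f x - c * g x) =O[l] h)
    (hh : h =O[l] g) : f =O[l] g := by
  have hcg : (fun x => c * g x) =O[l] g := (isBigO_refl g l).const_mul_left c
  simpa using (hf.trans hh).add hcg

theorem Asymptotics.IsBigO.sq_sub_const_mul_sq (hf : (fun x => f x - c * g x) =O[l] h)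
    (hh : h =O[l] g) : (fun x => f x ^ 2 - c ^ 2 * g x ^ 2) =O[l] fun x => g x * h x := by
  have hsum : (fun x => f x + c * g x) =O[l] g :=
    (hf.of_sub_const_mul hh).add ((isBigO_refl g l).const_mul_left c)
  refine (hsum.mul hf).congr_left fun x => ?_
  ring

end ConstMulExpansion

theorem isBigO_self_rpow_nhdsGT_zero {a : ℝ} (ha : a ≤ 1) :
    (fun ε : ℝ => ε) =O[𝓝[>] 0] fun ε => ε ^ a :=
  (IsBigO.id_rpow_of_le_one ha).mono (nhdsWithin_mono _ Ioi_subset_Ici_self)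

theorem div_mul_div_sq_mul_rpow_two_thirds {μ a K : ℝ} (hμ : μ ≠ 0) (hK : 0 ≤ K) :
    μ / (2 * (μ / a) ^ 2) * K ^ ((2 : ℝ) / 3) = (a * K ^ ((1 : ℝ) / 3)) ^ 2 / (2 * μ) := by
  rw [show (2 : ℝ) / 3 = 1 / 3 * (2 : ℕ) by norm_num, Real.rpow_mul_natCast hK]
  rcases eq_or_ne a 0 with rfl | ha
  · simp
  · field_simp

theorem liquidity_premium_asymptotics_general
    (μ σ γ : ℝ) (hμ : 0 < μ) (hγ : 0 < γ)
    (πs : ℝ) (hπs : πs = μ / (γ * σ ^ 2))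
    (ε₀ : ℝ) (hε₀ : 0 < ε₀) (lam : ℝ → ℝ)
    (hmem : ∀ ε ∈ Set.Ioo (0 : ℝ) ε₀, lam ε ∈ Set.Ioo 0 μ)
    (hlam : (fun ε : ℝ => lam ε
        - γ * σ ^ 2 * ((3 / (4 * γ)) * πs ^ 2 * (1 - πs) ^ 2) ^ ((1 : ℝ) / 3)
          * ε ^ ((1 : ℝ) / 3))
      =O[nhdsWithin 0 (Set.Ioi 0)] fun ε : ℝ => ε)
    (LiPr : ℝ → ℝ)
    (hLiPr : LiPr = fun ε : ℝ => μ - Real.sqrt (μ ^ 2 - lam ε ^ 2)) :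
    (fun ε : ℝ => LiPr ε
        - (μ / (2 * πs ^ 2)) * ((3 / (4 * γ)) * πs ^ 2 * (1 - πs) ^ 2) ^ ((2 : ℝ) / 3)
          * ε ^ ((2 : ℝ) / 3))
      =O[nhdsWithin 0 (Set.Ioi 0)] fun ε : ℝ => ε ^ ((4 : ℝ) / 3) := by
  set K := (3 / (4 * γ)) * πs ^ 2 * (1 - πs) ^ 2
  set c := γ * σ ^ 2 * K ^ ((1 : ℝ) / 3)
  have hcoef : μ / (2 * πs ^ 2) * K ^ ((2 : ℝ) / 3) = c ^ 2 / (2 * μ) :=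
    hπs ▸ div_mul_div_sq_mul_rpow_two_thirds hμ.ne' (by positivity)
  have hlin : (fun ε : ℝ => ε) =O[𝓝[>] 0] fun ε => ε ^ ((1 : ℝ) / 3) :=
    isBigO_self_rpow_nhdsGT_zero (by norm_num)
  have hbound : ∀ᶠ ε in 𝓝[>] (0 : ℝ), lam ε ^ 2 ≤ μ ^ 2 :=
    eventually_mem_set.2 (Ioo_mem_nhdsGT hε₀) |>.mono fun ε hε => by
      obtain ⟨hlam_pos, hlam_lt⟩ := hmem ε hε
      exact pow_le_pow_left₀ hlam_pos.le hlam_lt.le 2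
  have hpos : ∀ᶠ ε in 𝓝[>] (0 : ℝ), 0 < ε := self_mem_nhdsWithin
  have hsqrt : (fun ε => μ - √(μ ^ 2 - lam ε ^ 2) - lam ε ^ 2 / (2 * μ))
      =O[𝓝[>] 0] fun ε => ε ^ ((4 : ℝ) / 3) := by
    refine ((isBigO_sub_sqrt_sq_sub_sq_sub_sq_div hμ hbound).trans
      ((hlam.of_sub_const_mul hlin).pow 4)).congr' .rfl (hpos.mono fun ε hε => ?_)
    dsimp only
    rw [← Real.rpow_mul_natCast hε.le]
    norm_num
  have hsq : (fun ε => lam ε ^ 2 - c ^ 2 * (ε ^ ((1 : ℝ) / 3)) ^ 2)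
      =O[𝓝[>] 0] fun ε => ε ^ ((4 : ℝ) / 3) := by
    refine (hlam.sq_sub_const_mul_sq hlin).congr' .rfl (hpos.mono fun ε hε => ?_)
    dsimp only
    rw [← Real.rpow_add_one hε.ne']
    norm_num
  refine (hsqrt.add (hsq.const_mul_left (1 / (2 * μ)))).congr' (hpos.mono fun ε hε => ?_) .rfl
  subst hLiPr
  dsimp only
  rw [hcoef, ← Real.rpow_mul_natCast hε.le]
  norm_num
  field_simp
  ring

/-- Asymptotics of the liquidity premium:
`LiPr(ε) = (μ/(2π*²))·((3/(4γ))·π*²·(1-π*)²)^{2/3}·ε^{2/3} + O(ε^{4/3})`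
as `ε ↓ 0`. -/
theorem liquidity_premium_asymptotics
    (μ σ γ : ℝ) (hμ : 0 < μ) (hσ : 0 < σ) (hγ : 0 < γ)
    (hmerton : 0 < μ / (γ * σ ^ 2)) (hmerton1 : μ / (γ * σ ^ 2) ≠ 1)
    (πs : ℝ) (hπs : πs = μ / (γ * σ ^ 2))
    (ε₀ : ℝ) (hε₀ : 0 < ε₀) (lam : ℝ → ℝ)
    (hmem : ∀ ε ∈ Set.Ioo (0 : ℝ) ε₀, lam ε ∈ Set.Ioo 0 μ)
    (hlam : (fun ε : ℝ => lam ε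
        - γ * σ ^ 2 * ((3 / (4 * γ)) * πs ^ 2 * (1 - πs) ^ 2) ^ ((1 : ℝ) / 3)
          * ε ^ ((1 : ℝ) / 3))
      =O[nhdsWithin 0 (Set.Ioi 0)] fun ε : ℝ => ε)
    (LiPr : ℝ → ℝ)
    (hLiPr : LiPr = fun ε : ℝ => μ - Real.sqrt (μ ^ 2 - lam ε ^ 2)) :
    (fun ε : ℝ => LiPr ε
        - (μ / (2 * πs ^ 2)) * ((3 / (4 * γ)) * πs ^ 2 * (1 - πs) ^ 2) ^ ((2 : ℝ) / 3)
          * ε ^ ((2 : ℝ) / 3))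
      =O[nhdsWithin 0 (Set.Ioi 0)] fun ε : ℝ => ε ^ ((4 : ℝ) / 3) :=
  liquidity_premium_asymptotics_general μ σ γ hμ hγ πs hπs ε₀ hε₀ lam hmem hlam LiPr hLiPr
end

section
/- Let μ > 0, σ > 0 with μ ≠ σ²/2, γ > 0 with 0 < μ/(γσ²) < 1, write π* = μ/(γσ²), and let ε₀ > 0 and λ : (0, ε₀) → (0, μ) satisfy μ + λ(ε) < γσ² for all ε and λ(ε) = γσ²·( (3/(4γ))·π*²·(1−π*)² )^{1/3}·ε^{1/3} + O(ε) as ε ↓ 0. Define π₋(ε) = (μ−λ(ε))/(γσ²), π₊(ε) = (μ+λ(ε))/(γσ²), R(ε) = (1/(1−ε))·( (μ+λ(ε))·(γσ² − μ + λ(ε)) ) / ( (μ−λ(ε))·(γσ² − μ − λ(ε)) ), and the average share turnover ShTu(ε) = (σ²/2)·(2μ/σ² − 1)·( (1−π₋(ε))/(R(ε)^{2μ/σ² − 1} − 1) − (1−π₊(ε))/(R(ε)^{1 − 2μ/σ²} − 1) ). Then ShTu(ε) = (σ²/2)·(1−π*)²·π*·( (3/(4γ))·π*²·(1−π*)² )^{−1/3}·ε^{−1/3}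 + O(ε^{1/3}) as ε ↓ 0. -/
/-
With `d = λ/(γσ²)`, `β = 2μ/σ² - 1`, `L = log R` and `g x = (eˣ - 1)⁻¹ - x⁻¹ + 1/2`, writing
`R^β = e^{βL}` turns the turnover into `(σ²/2)·(2(1-π*)/L + 2(1-π*)·β·g(βL) - β·d)`.
Since `g x = O(x)` and `d, L = O(ε^{1/3})`, only `2(1-π*)/L` matters. Because
`log (t + d) - log (t - d) = 2d/t + O(d³)` has no quadratic term, `L = a·d + O(d³) + O(ε)` with
`a = 2/(π*(1-π*))`, i.e. `L = a·c·ε^{1/3} + O(ε)` for `c = ((3/(4γ))π*²(1-π*)²)^{1/3}`, and then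
`1/L = 1/(a·c·ε^{1/3}) + O(ε^{1/3})`, which is the leading term.
-/

open Asymptotics Filter Topology

namespace Real

theorem isBigO_sum_range_add_log_one_sub (n : ℕ) :
    (fun x : ℝ => (∑ i ∈ Finset.range n, x ^ (i + 1) / (i + 1)) + log (1 - x))
      =O[𝓝 0] fun x => x ^ (n + 1) := by
  refine IsBigO.of_bound 2 ?_
  filter_upwards [Metric.ball_mem_nhds (0 : ℝ) one_half_pos] with x hx
  rw [Metric.mem_ball, dist_zero_right, norm_eq_abs] at hx
  rw [norm_eq_abs, norm_eq_abs, abs_pow]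
  refine (abs_log_sub_add_sum_range_le (hx.trans one_half_lt_one) n).trans ?_
  rw [div_le_iff₀ (by linarith)]
  nlinarith [pow_nonneg (abs_nonneg x) (n + 1)]

theorem isBigO_log_one_sub : (fun x : ℝ => log (1 - x)) =O[𝓝 0] fun x => x := by
  simpa using isBigO_sum_range_add_log_one_sub 0

theorem isBigO_log_one_add_sub_log_one_sub :
    (fun u : ℝ => log (1 + u) - log (1 - u) - 2 * u) =O[𝓝 0] fun u => u ^ 3 := by
  have h : (fun x : ℝ => x + x ^ 2 / 2 + log (1 - x)) =O[𝓝 0] fun x => x ^ 3 := by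
    simpa [Finset.sum_range_succ, one_add_one_eq_two] using isBigO_sum_range_add_log_one_sub 2
  have hneg : (fun x : ℝ => -x + x ^ 2 / 2 + log (1 + x)) =O[𝓝 0] fun x => x ^ 3 := by
    refine (h.comp_tendsto (continuous_neg.tendsto' (0 : ℝ) 0 neg_zero)).neg_right.congr
      (fun x => ?_) (fun x => ?_) <;> simp [Odd.neg_pow (by decide : Odd 3)]
  exact (hneg.sub h).congr_left fun u => by ring

theorem isBigO_log_add_sub_log_sub {t : ℝ} (ht : t ≠ 0) :
    (fun d : ℝ => log (t + d) - log (t - d) - 2 * d / t) =O[𝓝 0] fun d => d ^ 3 := by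
  have hu : Tendsto (fun d : ℝ => d / t) (𝓝 0) (𝓝 0) := by
    simpa using (continuous_id.div_const t).tendsto 0
  have hcube : (fun d : ℝ => (d / t) ^ 3) =O[𝓝 0] fun d => d ^ 3 :=
    (isBigO_const_mul_self (t⁻¹ ^ 3) _ _).congr_left fun d => by ring
  refine ((isBigO_log_one_add_sub_log_one_sub.comp_tendsto hu).trans hcube).congr' ?_ .rfl
  filter_upwards [hu.eventually (Metric.ball_mem_nhds 0 one_pos)] with d hd
  rw [dist_zero_right, norm_eq_abs, abs_lt] at hd
  have h1 : t + d = t * (1 + d / t) := by field_simp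
  have h2 : t - d = t * (1 - d / t) := by field_simp
  simp only [Function.comp_apply]
  rw [h1, h2, log_mul ht (by linarith), log_mul ht (by linarith)]
  ring

theorem isBigO_inv_exp_sub_one_sub_inv :
    (fun x : ℝ => (exp x - 1)⁻¹ - x⁻¹ + 1 / 2) =O[𝓝[≠] 0] fun x => x := by
  have h3 : (fun x => exp x - (1 + x + x ^ 2 / 2)) =O[𝓝 0] (· ^ 3) := by
    simpa [Finset.sum_range_succ, add_assoc] using exp_sub_sum_range_isBigO_pow 3
  have h2 : (fun x => exp x - (1 + x)) =O[𝓝 0] (· ^ 2) := by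
    simpa [Finset.sum_range_succ] using exp_sub_sum_range_isBigO_pow 2
  -- `(exp x - 1)⁻¹ - x⁻¹ + 1 / 2` is this numerator over `x (exp x - 1)`, which is `~ x ^ 2`
  have hnum : (fun x => x - (exp x - 1) + x * (exp x - 1) / 2) =O[𝓝 0] (· ^ 3) := by
    have h2' := (((isBigO_refl (fun x : ℝ => x) _).const_mul_left (1 / 2)).mul h2).congr_right
      (g₂ := (· ^ 3)) fun x => by ring
    exact (h3.neg_left.add h2').congr_left fun x => by ring
  have hequiv : (fun x => exp x - 1) ~[𝓝 0] fun x => x :=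
    IsLittleO.isEquivalent ((h2.trans_isLittleO (isLittleO_pow_id one_lt_two)).congr_left
      fun x => by simp only [Pi.sub_apply]; ring)
  have hden : (fun x => (x * (exp x - 1))⁻¹) =O[𝓝 0] fun x => (x * x)⁻¹ :=
    (IsEquivalent.refl.mul hequiv).inv.isBigO
  refine ((hnum.mul hden).mono nhdsWithin_le_nhds).congr' ?_ ?_ <;>
    filter_upwards [self_mem_nhdsWithin] with x (hx : x ≠ 0)
  · have : exp x - 1 ≠ 0 := sub_ne_zero.2 ((exp_eq_one_iff x).not.2 hx)
    field_simp
  · field_simp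

end Real

theorem Asymptotics.IsEquivalent.isBigO_inv_sub_inv {α 𝕜 : Type*} [NormedField 𝕜]
    {l : Filter α} {u v w : α → 𝕜} (huv : u ~[l] v) (h : (u - v) =O[l] (v ^ 2 * w))
    (hv : ∀ᶠ x in l, v x ≠ 0) : (u⁻¹ - v⁻¹) =O[l] w := by
  have hu : ∀ᶠ x in l, u x ≠ 0 := by
    filter_upwards [huv.symm.isBigO.eq_zero_imp, hv] with x hx hvx hux using hvx (hx hux)
  refine ((h.neg_left.mul huv.inv.isBigO).mul (isBigO_refl v⁻¹ l)).congr' ?_ ?_ <;>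
    filter_upwards [hu, hv] with x hux hvx
  · simp only [Pi.sub_apply, Pi.inv_apply]
    field_simp
    ring
  · simp only [Pi.mul_apply, Pi.pow_apply, Pi.inv_apply]
    field_simp

open Real

/-- `R(ε)` in terms of `p = π*` and the normalized gap `d = λ(ε)/(γσ²)`. -/
noncomputable def widthRatio (p d ε : ℝ) : ℝ :=
  (1 - ε)⁻¹ * ((p + d) * (1 - p + d)) / ((p - d) * (1 - p - d))

/-- `ShTu(ε) = (σ²/2) β · turnoverBracket π* β (λ(ε)/(γσ²)) R(ε)` with `β = 2μ/σ² - 1`. -/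
noncomputable def turnoverBracket (p β d R : ℝ) : ℝ :=
  (1 - (p - d)) / (R ^ β - 1) - (1 - (p + d)) / (R ^ (-β) - 1)

theorem widthRatio_div_div {k : ℝ} (hk : k ≠ 0) (μ lam ε : ℝ) :
    widthRatio (μ / k) (lam / k) ε
      = 1 / (1 - ε) * ((μ + lam) * (k - μ + lam)) / ((μ - lam) * (k - μ - lam)) := by
  have hN : (μ + lam) * (k - μ + lam) = k ^ 2 * ((μ / k + lam / k) * (1 - μ / k + lam / k)) := by
    field_simp
  have hD : (μ - lam) * (k - μ - lam) = k ^ 2 * ((μ / k - lam / k) * (1 - μ / k - lam / k)) := by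
    field_simp
  rw [hN, hD, mul_div_assoc, mul_div_mul_left _ _ (pow_ne_zero 2 hk), widthRatio, one_div,
    mul_div_assoc]

section WidthRatio

variable {p d ε : ℝ}

theorem widthRatio_pos (hp : |d| < p) (hq : |d| < 1 - p) (hε : ε < 1) :
    0 < widthRatio p d ε := by
  rw [abs_lt] at hp hq
  unfold widthRatio
  have : 0 < (1 - ε)⁻¹ := inv_pos.2 (by linarith)
  have : 0 < p + d := by linarith
  have : 0 < p - d := by linarith
  have : 0 < 1 - p + d := by linarith
  have : 0 < 1 - p - d := by linarith
  positivity

theorem log_widthRatio (hp : |d| < p) (hq : |d| < 1 - p) (hε : ε < 1) :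
    log (widthRatio p d ε) = (log (p + d) - log (p - d)) + (log (1 - p + d) - log (1 - p - d))
      - log (1 - ε) := by
  rw [abs_lt] at hp hq
  have h1 : 1 - ε ≠ 0 := by linarith
  have h2 : p + d ≠ 0 := by linarith
  have h3 : p - d ≠ 0 := by linarith
  have h4 : 1 - p + d ≠ 0 := by linarith
  have h5 : 1 - p - d ≠ 0 := by linarith
  unfold widthRatio
  rw [log_div (mul_ne_zero (inv_ne_zero h1) (mul_ne_zero h2 h4)) (mul_ne_zero h3 h5),
    log_mul (inv_ne_zero h1) (mul_ne_zero h2 h4), log_mul h2 h4, log_mul h3 h5, log_inv]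
  ring

end WidthRatio

theorem turnoverBracket_eq {p β d R : ℝ} (hR : 0 < R) (hx : β * log R ≠ 0) :
    turnoverBracket p β d R = 2 * (1 - p) / (exp (β * log R) - 1) + (1 - p - d) := by
  have hY : exp (β * log R) - 1 ≠ 0 := sub_ne_zero.2 ((exp_eq_one_iff _).not.2 hx)
  rw [turnoverBracket, rpow_def_of_pos hR, rpow_def_of_pos hR, mul_neg, exp_neg, mul_comm (log R)]
  have hY' : (exp (β * log R))⁻¹ - 1 = -(exp (β * log R) - 1) / exp (β * log R) := by
    field_simp
    ring
  rw [hY']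
  field_simp
  ring

section Asymptotics

variable {α : Type*} {l : Filter α} {p c : ℝ} {d ε e : α → ℝ}

theorem eventually_abs_lt_and_lt_one (hd : Tendsto d l (𝓝 0))
    (hε : Tendsto ε l (𝓝 0)) (hp0 : 0 < p) (hp1 : p < 1) :
    ∀ᶠ x in l, |d x| < p ∧ |d x| < 1 - p ∧ ε x < 1 := by
  have hd' : Tendsto (fun x => |d x|) l (𝓝 0) := by simpa using hd.abs
  filter_upwards [hd'.eventually_lt_const hp0, hd'.eventually_lt_const (sub_pos.2 hp1),
    hε.eventually_lt_const one_pos] with x h1 h2 h3 using ⟨h1, h2, h3⟩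

theorem isBigO_log_widthRatio_sub (hp0 : 0 < p) (hp1 : p < 1) {r : α → ℝ}
    (hd : Tendsto d l (𝓝 0)) (hε : Tendsto ε l (𝓝 0)) (hd3 : (fun x => d x ^ 3) =O[l] r)
    (hεr : ε =O[l] r) :
    (fun x => log (widthRatio p (d x) (ε x)) - 2 / (p * (1 - p)) * d x) =O[l] r := by
  have hq : 1 - p ≠ 0 := by linarith
  have h1 := ((isBigO_log_add_sub_log_sub hp0.ne').comp_tendsto hd).trans hd3
  have h2 := ((isBigO_log_add_sub_log_sub hq).comp_tendsto hd).trans hd3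
  have h3 := (isBigO_log_one_sub.comp_tendsto hε).trans hεr
  refine ((h1.add h2).sub h3).congr' ?_ .rfl
  filter_upwards [eventually_abs_lt_and_lt_one hd hε hp0 hp1] with x ⟨hdp, hdq, hεx⟩
  simp only [Function.comp_apply]
  rw [log_widthRatio hdp hdq hεx]
  field_simp
  ring

theorem isBigO_of_isBigO_sub_const_mul (he : Tendsto e l (𝓝 0))
    (hd : (fun x => d x - c * e x) =O[l] fun x => e x ^ 3) : d =O[l] e :=
  ((hd.trans ((isLittleO_pow_id (by norm_num)).comp_tendsto he).isBigO).add
    ((isBigO_refl e l).const_mul_left c)).congr_left fun x => by ring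

theorem isBigO_log_widthRatio_sub_mul (hp0 : 0 < p) (hp1 : p < 1)
    (he : Tendsto e l (𝓝 0)) (hd : (fun x => d x - c * e x) =O[l] fun x => e x ^ 3)
    (hε : ε =O[l] fun x => e x ^ 3) :
    (fun x => log (widthRatio p (d x) (ε x)) - 2 / (p * (1 - p)) * c * e x)
      =O[l] fun x => e x ^ 3 := by
  have hde := isBigO_of_isBigO_sub_const_mul he hd
  have hε0 : Tendsto ε l (𝓝 0) := hε.trans_tendsto (by simpa using he.pow 3)
  exact ((isBigO_log_widthRatio_sub hp0 hp1 (hde.trans_tendsto he) hε0 (hde.pow 3) hε).add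
    (hd.const_mul_left (2 / (p * (1 - p))))).congr_left fun x => by ring

theorem isBigO_mul_turnoverBracket_sub {β : ℝ} (hp0 : 0 < p) (hp1 : p < 1) (hβ : β ≠ 0)
    (hc : c ≠ 0) (he : Tendsto e l (𝓝 0)) (he0 : ∀ᶠ x in l, e x ≠ 0)
    (hd : (fun x => d x - c * e x) =O[l] fun x => e x ^ 3) (hε : ε =O[l] fun x => e x ^ 3) :
    (fun x => β * turnoverBracket p β (d x) (widthRatio p (d x) (ε x))
      - (1 - p) ^ 2 * p / (c * e x)) =O[l] e := by
  set a := 2 / (p * (1 - p)) with ha_def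
  have ha : a ≠ 0 := by positivity
  have hac : a * c ≠ 0 := mul_ne_zero ha hc
  have hde := isBigO_of_isBigO_sub_const_mul he hd
  have hε0 : Tendsto ε l (𝓝 0) := hε.trans_tendsto (by simpa using he.pow 3)
  set L := fun x => log (widthRatio p (d x) (ε x)) with hL_def
  have hL := isBigO_log_widthRatio_sub_mul hp0 hp1 he hd hε
  have hLeq : L ~[l] fun x => a * c * e x :=
    IsLittleO.isEquivalent (hL.trans_isLittleO (((isLittleO_pow_id (by norm_num)).comp_tendsto
      he).trans_isBigO (isBigO_self_const_mul hac e l)))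
  have hace0 : ∀ᶠ x in l, a * c * e x ≠ 0 := he0.mono fun x hx => mul_ne_zero hac hx
  have hinv : (L⁻¹ - fun x => (a * c * e x)⁻¹) =O[l] e := by
    refine hLeq.isBigO_inv_sub_inv (hL.trans ?_) hace0
    exact (isBigO_const_mul_self ((a * c)⁻¹ ^ 2) _ l).congr_left fun x => by
      simp only [Pi.mul_apply, Pi.pow_apply]; field_simp
  have hLe : L =O[l] e := hLeq.isBigO.trans (isBigO_const_mul_self (a * c) e l)
  have hL0 : ∀ᶠ x in l, L x ≠ 0 := by
    filter_upwards [hLeq.symm.isBigO.eq_zero_imp, hace0] with x h hx hLx using hx (h hLx)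
  have hx : Tendsto (fun x => β * L x) l (𝓝[≠] 0) :=
    tendsto_nhdsWithin_iff.2 ⟨by simpa using (hLe.const_mul_left β).trans_tendsto he,
      hL0.mono fun x h => mul_ne_zero hβ h⟩
  have hg := (isBigO_inv_exp_sub_one_sub_inv.comp_tendsto hx).trans (hLe.const_mul_left β)
  refine (((hg.const_mul_left (2 * (1 - p) * β)).add (hinv.const_mul_left (2 * (1 - p)))).sub
    (hde.const_mul_left β)).congr' ?_ .rfl
  filter_upwards [eventually_abs_lt_and_lt_one (hde.trans_tendsto he) hε0 hp0 hp1, hL0, he0]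
    with x ⟨hdp, hdq, hεx⟩ hLx hex
  rw [turnoverBracket_eq (widthRatio_pos hdp hdq hεx) (mul_ne_zero hβ hLx)]
  simp only [Function.comp_apply, Pi.sub_apply, Pi.inv_apply, hL_def, ha_def] at hLx ⊢
  field_simp
  ring

end Asymptotics

theorem share_turnover_asymptotics_general
    (μ σ γ : ℝ) (hσ : 0 < σ) (hdrift : μ ≠ σ ^ 2 / 2) (hγ : 0 < γ)
    (hmerton : 0 < μ / (γ * σ ^ 2)) (hmerton1 : μ / (γ * σ ^ 2) < 1)
    (πs : ℝ) (hπs : πs = μ / (γ * σ ^ 2))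
    (lam : ℝ → ℝ)
    (hlam : (fun ε : ℝ => lam ε
        - γ * σ ^ 2 * ((3 / (4 * γ)) * πs ^ 2 * (1 - πs) ^ 2) ^ ((1 : ℝ) / 3)
          * ε ^ ((1 : ℝ) / 3))
      =O[nhdsWithin 0 (Set.Ioi 0)] fun ε : ℝ => ε)
    (πm πp R ShTu : ℝ → ℝ)
    (hπm : πm = fun ε : ℝ => (μ - lam ε) / (γ * σ ^ 2))
    (hπp : πp = fun ε : ℝ => (μ + lam ε) / (γ * σ ^ 2))
    (hR : R = fun ε : ℝ => (1 / (1 - ε))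
      * ((μ + lam ε) * (γ * σ ^ 2 - μ + lam ε))
      / ((μ - lam ε) * (γ * σ ^ 2 - μ - lam ε)))
    (hShTu : ShTu = fun ε : ℝ => (σ ^ 2 / 2) * (2 * μ / σ ^ 2 - 1)
      * ((1 - πm ε) / (R ε ^ (2 * μ / σ ^ 2 - 1) - 1)
        - (1 - πp ε) / (R ε ^ (1 - 2 * μ / σ ^ 2) - 1))) :
    (fun ε : ℝ => ShTu ε
        - (σ ^ 2 / 2) * (1 - πs) ^ 2 * πs
          * ((3 / (4 * γ)) * πs ^ 2 * (1 - πs) ^ 2) ^ (-(1 : ℝ) / 3)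
          * ε ^ (-(1 : ℝ) / 3))
      =O[nhdsWithin 0 (Set.Ioi 0)] fun ε : ℝ => ε ^ ((1 : ℝ) / 3) := by
  subst hπs hπm hπp hR hShTu
  set k := γ * σ ^ 2
  have hk : 0 < k := by positivity
  have hβ : 2 * μ / σ ^ 2 - 1 ≠ 0 := by
    intro h; apply hdrift; field_simp at h ⊢; linarith
  set Q := 3 / (4 * γ) * (μ / k) ^ 2 * (1 - μ / k) ^ 2
  have hQ : 0 < Q := by have := sub_pos.2 hmerton1; positivity
  have he : Tendsto (fun ε : ℝ => ε ^ ((1 : ℝ) / 3)) (𝓝[>] 0) (𝓝 0) :=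
    ((continuous_rpow_const (by norm_num)).tendsto' 0 0 (zero_rpow (by norm_num))).mono_left
      nhdsWithin_le_nhds
  have hcube : (fun ε : ℝ => (ε ^ ((1 : ℝ) / 3)) ^ 3) =ᶠ[𝓝[>] 0] fun ε => ε := by
    filter_upwards [self_mem_nhdsWithin] with ε (hε : 0 < ε)
    simpa using rpow_inv_natCast_pow hε.le (n := 3) (by norm_num)
  have hd : (fun ε => lam ε / k - Q ^ ((1 : ℝ) / 3) * ε ^ ((1 : ℝ) / 3))
      =O[𝓝[>] 0] fun ε => (ε ^ ((1 : ℝ) / 3)) ^ 3 :=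
    ((hlam.const_mul_left k⁻¹).congr_left fun ε => by field_simp).trans hcube.symm.isBigO
  have key := isBigO_mul_turnoverBracket_sub hmerton hmerton1 hβ (rpow_pos_of_pos hQ _).ne' he
    (eventually_mem_nhdsWithin.mono fun ε (hε : 0 < ε) => (rpow_pos_of_pos hε _).ne') hd
    hcube.symm.isBigO
  refine (key.const_mul_left (σ ^ 2 / 2)).congr' ?_ .rfl
  filter_upwards [self_mem_nhdsWithin] with ε (hε : 0 < ε)
  rw [turnoverBracket, widthRatio_div_div hk.ne', ← sub_div, ← add_div,
    show 1 - 2 * μ / σ ^ 2 = -(2 * μ / σ ^ 2 - 1) by ring, show -(1 : ℝ) / 3 = -(1 / 3) by norm_num,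
    rpow_neg hQ.le, rpow_neg hε.le]
  field_simp

/-- Asymptotics of the long-term average share turnover:
`ShTu(ε) = (σ²/2)·(1-π*)²·π*·((3/(4γ))·π*²·(1-π*)²)^{-1/3}·ε^{-1/3}
+ O(ε^{1/3})` as `ε ↓ 0`. -/
theorem share_turnover_asymptotics
    (μ σ γ : ℝ) (hμ : 0 < μ) (hσ : 0 < σ) (hdrift : μ ≠ σ ^ 2 / 2) (hγ : 0 < γ)
    (hmerton : 0 < μ / (γ * σ ^ 2)) (hmerton1 : μ / (γ * σ ^ 2) < 1)
    (πs : ℝ) (hπs : πs = μ / (γ * σ ^ 2))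
    (ε₀ : ℝ) (hε₀ : 0 < ε₀) (lam : ℝ → ℝ)
    (hmem : ∀ ε ∈ Set.Ioo (0 : ℝ) ε₀, lam ε ∈ Set.Ioo 0 μ)
    (hlev : ∀ ε ∈ Set.Ioo (0 : ℝ) ε₀, μ + lam ε < γ * σ ^ 2)
    (hlam : (fun ε : ℝ => lam ε
        - γ * σ ^ 2 * ((3 / (4 * γ)) * πs ^ 2 * (1 - πs) ^ 2) ^ ((1 : ℝ) / 3)
          * ε ^ ((1 : ℝ) / 3))
      =O[nhdsWithin 0 (Set.Ioi 0)] fun ε : ℝ => ε)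
    (πm πp R ShTu : ℝ → ℝ)
    (hπm : πm = fun ε : ℝ => (μ - lam ε) / (γ * σ ^ 2))
    (hπp : πp = fun ε : ℝ => (μ + lam ε) / (γ * σ ^ 2))
    (hR : R = fun ε : ℝ => (1 / (1 - ε))
      * ((μ + lam ε) * (γ * σ ^ 2 - μ + lam ε))
      / ((μ - lam ε) * (γ * σ ^ 2 - μ - lam ε)))
    (hShTu : ShTu = fun ε : ℝ => (σ ^ 2 / 2) * (2 * μ / σ ^ 2 - 1)
      * ((1 - πm ε) / (R ε ^ (2 * μ / σ ^ 2 - 1) - 1)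
        - (1 - πp ε) / (R ε ^ (1 - 2 * μ / σ ^ 2) - 1))) :
    (fun ε : ℝ => ShTu ε
        - (σ ^ 2 / 2) * (1 - πs) ^ 2 * πs
          * ((3 / (4 * γ)) * πs ^ 2 * (1 - πs) ^ 2) ^ (-(1 : ℝ) / 3)
          * ε ^ (-(1 : ℝ) / 3))
      =O[nhdsWithin 0 (Set.Ioi 0)] fun ε : ℝ => ε ^ ((1 : ℝ) / 3) :=
  share_turnover_asymptotics_general μ σ γ hσ hdrift hγ hmerton hmerton1 πs hπs lam hlam πm πp R
    ShTu hπm hπp hR hShTu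
end

section
/- Let μ > 0, σ > 0, γ > 0, and ε ∈ (0,1). Suppose π₋' and π₊' are real numbers (trading boundaries expressed as risky weights with respect to the average/reference price) satisfying π₋' < μ/(γσ²) and μ/(γσ²(1−ε) + εμ) < π₊' < μ/((1/2)γσ²(1−ε) + εμ). Define the boundaries in terms of trading prices by π₋ = π₋' and π₊ = (1−ε)·π₊' / (1 − ε·π₊') (this is well-defined since ε·π₊' < 1 under the stated hypotheses). Then π₋ < μ/(γσ²) < π₊ < 2μ/(γσ²); in particular, the Merton proportion μ/(γσ²) always lies strictly between the buy boundary π₋ and the sell boundary π₊ when boundaries are expressed with trading prices. -/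
/-- When trading boundaries are expressed with trading prices
(ask price for the buy boundary, bid price for the sell boundary), the Merton
proportion `μ/(γσ²)` always lies strictly between them:
`π₋ < μ/(γσ²) < π₊ < 2μ/(γσ²)`. -/
theorem merton_proportion_between_boundaries
    (μ σ γ ε : ℝ) (hμ : 0 < μ) (hσ : 0 < σ) (hγ : 0 < γ)
    (hε : ε ∈ Set.Ioo (0 : ℝ) 1)
    (πm' πp' : ℝ)
    (hm : πm' < μ / (γ * σ ^ 2))
    (hp1 : μ / (γ * σ ^ 2 * (1 - ε) + ε * μ) < πp')
    (hp2 : πp' < μ / ((1 / 2) * γ * σ ^ 2 * (1 - ε) + ε * μ))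
    (πm πp : ℝ)
    (hπm : πm = πm')
    (hπp : πp = (1 - ε) * πp' / (1 - ε * πp')) :
    ε * πp' < 1 ∧
    πm < μ / (γ * σ ^ 2) ∧ μ / (γ * σ ^ 2) < πp ∧ πp < 2 * μ / (γ * σ ^ 2) := by
  obtain ⟨hε0, hε1⟩ := hε
  have h1ε : 0 < 1 - ε := by linarith
  have hA : 0 < γ * σ ^ 2 := by positivity
  have hd1 : 0 < γ * σ ^ 2 * (1 - ε) + ε * μ := by positivity
  have hd2 : 0 < (1 / 2) * γ * σ ^ 2 * (1 - ε) + ε * μ := by positivity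
  have hp1' : μ < πp' * (γ * σ ^ 2 * (1 - ε) + ε * μ) := (div_lt_iff₀ hd1).mp hp1
  have hp2' : πp' * ((1 / 2) * γ * σ ^ 2 * (1 - ε) + ε * μ) < μ := (lt_div_iff₀ hd2).mp hp2
  have hπp'pos : 0 < πp' := lt_trans (div_pos hμ hd1) hp1
  have hεπ : ε * πp' < 1 := by nlinarith
  have h1π : 0 < 1 - ε * πp' := by linarith
  refine ⟨hεπ, ?_, ?_, ?_⟩
  · rw [hπm]; exact hm
  · rw [hπp, div_lt_div_iff₀ hA h1π]
    nlinarith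
  · rw [hπp, div_lt_div_iff₀ h1π hA]
    nlinarith
end
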